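/- Let X be a connected topological space and C ⊆ X a nonempty proper closed subset. Let f : C → 𝒫*(X) be upper semicontinuous with connected values and f(x) ∩ C ≠ ∅ for every x ∈ ∂C. Then there exists a chain x_0, x_1, x_2, x_3 with x_i ∈ f(x_{i-1}) and x_{i-1} ∈ C for i = 1, 2, 3. -/

import Mathlib

/-!
Suppose there is no chain. Let `A` be the set of points of `C` that `F` maps entirely outside `C`.
By the boundary condition `A` lies in the interior of `C`, so upper semicontinuity makes `A` open.
If `z ∈ C \ A`, every point of `F z ∩ C` lies in `A` (otherwise the chain could be continued), so
the connected set `F z` lies in `A ∪ Cᶜ` and meets `A`, hence lies in `A`. Thus `C` splits into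
`A` and the relatively open set `{z ∈ C | F z ⊆ A}`, which makes `A` closed as well. In the
connected space `X` the clopen set `A` is then empty or everything, and both are absurd.
-/

open Set

section Escape

variable {X : Type*} [TopologicalSpace X] {C : Set X} {F : X → Set X}

def escapeSet (C : Set X) (F : X → Set X) : Set X := {x | x ∈ C ∧ F x ⊆ Cᶜ}

lemma exists_isOpen_forall_mem_iff_subset
    (husc : ∀ U : Set X, IsOpen U → IsOpen {x : C | F (x : X) ⊆ U}) {U : Set X} (hU : IsOpen U) :
    ∃ V, IsOpen V ∧ ∀ x ∈ C, x ∈ V ↔ F x ⊆ U := by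
  obtain ⟨V, hV, hVeq⟩ := isOpen_induced_iff.mp (husc U hU)
  refine ⟨V, hV, fun x hx => ?_⟩
  change (⟨x, hx⟩ : C) ∈ Subtype.val ⁻¹' V ↔ _
  rw [hVeq]
  rfl

lemma escapeSet_subset_interior (hbdr : ∀ x ∈ frontier C, (F x ∩ C).Nonempty) :
    escapeSet C F ⊆ interior C := by
  rintro x ⟨hxC, hxF⟩
  rw [← self_sdiff_frontier]
  refine ⟨hxC, fun hfr => ?_⟩
  obtain ⟨y, hyF, hyC⟩ := hbdr x hfr
  exact hxF hyF hyC

lemma isOpen_escapeSet (hC : IsClosed C)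
    (husc : ∀ U : Set X, IsOpen U → IsOpen {x : C | F (x : X) ⊆ U})
    (hbdr : ∀ x ∈ frontier C, (F x ∩ C).Nonempty) :
    IsOpen (escapeSet C F) := by
  obtain ⟨V, hV, hVC⟩ := exists_isOpen_forall_mem_iff_subset husc hC.isOpen_compl
  have hA : escapeSet C F = V ∩ interior C := by
    ext x
    refine ⟨fun hx => ⟨(hVC x hx.1).2 hx.2, escapeSet_subset_interior hbdr hx⟩, ?_⟩
    rintro ⟨hxV, hxi⟩
    have hxC := interior_subset hxi
    exact ⟨hxC, (hVC x hxC).1 hxV⟩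
  rw [hA]
  exact hV.inter isOpen_interior

lemma subset_escapeSet_of_notMem (hC : IsClosed C) (hA : IsOpen (escapeSet C F))
    (hstep : ∀ x ∈ C, F x ∩ C ⊆ escapeSet C F) {z : X} (hzC : z ∈ C)
    (hzA : z ∉ escapeSet C F) (hconn : IsPreconnected (F z)) :
    F z ⊆ escapeSet C F := by
  have hmeet : (F z ∩ C).Nonempty := by
    by_contra hdisj
    exact hzA ⟨hzC, fun y hy hyC => hdisj ⟨y, hy, hyC⟩⟩
  have hcover : F z ⊆ escapeSet C F ∪ Cᶜ := fun y hy =>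
    (em (y ∈ C)).imp (fun hyC => hstep z hzC ⟨hy, hyC⟩) id
  have hdisj : Disjoint (escapeSet C F) Cᶜ :=
    disjoint_left.mpr fun _ hx hxC => hxC hx.1
  obtain ⟨w, hw⟩ := hmeet
  exact hconn.subset_left_of_subset_union hA hC.isOpen_compl hdisj hcover
    ⟨w, hw.1, hstep z hzC hw⟩

lemma isClosed_escapeSet (hC : IsClosed C)
    (husc : ∀ U : Set X, IsOpen U → IsOpen {x : C | F (x : X) ⊆ U})
    (hne : ∀ x ∈ C, (F x).Nonempty) (hA : IsOpen (escapeSet C F))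
    (hmaps : ∀ z ∈ C, z ∉ escapeSet C F → F z ⊆ escapeSet C F) :
    IsClosed (escapeSet C F) := by
  obtain ⟨V, hV, hVC⟩ := exists_isOpen_forall_mem_iff_subset husc hA
  suffices escapeSet C F = C ∩ Vᶜ from this ▸ hC.inter hV.isClosed_compl
  ext x
  refine ⟨fun hx => ⟨hx.1, fun hxV => ?_⟩, fun ⟨hxC, hxV⟩ => ?_⟩
  · obtain ⟨y, hy⟩ := hne x hx.1
    exact hx.2 hy ((hVC x hx.1).1 hxV hy).1
  · by_contra hxA
    exact hxV ((hVC x hxC).2 (hmaps x hxC hxA))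

theorem exists_mem_inter_nonempty_inter [ConnectedSpace X] (hCne : C.Nonempty)
    (hC : IsClosed C) (hne : ∀ x ∈ C, (F x).Nonempty)
    (hconn : ∀ x ∈ C, IsPreconnected (F x))
    (husc : ∀ U : Set X, IsOpen U → IsOpen {x : C | F (x : X) ⊆ U})
    (hbdr : ∀ x ∈ frontier C, (F x ∩ C).Nonempty) :
    ∃ x₀ ∈ C, ∃ x₁ ∈ F x₀ ∩ C, (F x₁ ∩ C).Nonempty := by
  by_contra! hchain
  have hstep : ∀ x ∈ C, F x ∩ C ⊆ escapeSet C F := fun x hx y hy =>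
    ⟨hy.2, fun w hw hwC => (hchain x hx y hy).subset ⟨hw, hwC⟩⟩
  have hA := isOpen_escapeSet hC husc hbdr
  have hmaps : ∀ z ∈ C, z ∉ escapeSet C F → F z ⊆ escapeSet C F := fun z hz hzA =>
    subset_escapeSet_of_notMem hC hA hstep hz hzA (hconn z hz)
  obtain ⟨x, hx⟩ := hCne
  obtain ⟨y, hy⟩ := hne x hx
  rcases isClopen_iff.mp ⟨isClosed_escapeSet hC husc hne hA hmaps, hA⟩ with hA0 | hAuniv
  · have hxA : x ∉ escapeSet C F := hA0 ▸ notMem_empty x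
    exact notMem_empty y (hA0 ▸ hmaps x hx hxA hy)
  · have hxA : x ∈ escapeSet C F := hAuniv ▸ mem_univ x
    exact hxA.2 hy (hAuniv ▸ mem_univ y : y ∈ escapeSet C F).1

end Escape

theorem dvt_corr_chain_three_general
    {X : Type*} [TopologicalSpace X] [ConnectedSpace X]
    (C : Set X) (hCne : C.Nonempty)
    (hC : IsClosed C) (F : X → Set X)
    (hne : ∀ x ∈ C, (F x).Nonempty)
    (hconn : ∀ x ∈ C, IsPreconnected (F x))
    (husc : ∀ U : Set X, IsOpen U → IsOpen {x : C | F (x : X) ⊆ U})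
    (hbdr : ∀ x ∈ frontier C, (F x ∩ C).Nonempty) :
    ∃ x₀ x₁ x₂ x₃, x₀ ∈ C ∧ x₁ ∈ F x₀ ∧ x₁ ∈ C ∧ x₂ ∈ F x₁ ∧ x₂ ∈ C ∧
      x₃ ∈ F x₂ := by
  obtain ⟨x₀, hx₀, x₁, ⟨hx₁F, hx₁C⟩, x₂, hx₂F, hx₂C⟩ :=
    exists_mem_inter_nonempty_inter hCne hC hne hconn husc hbdr
  obtain ⟨x₃, hx₃⟩ := hne x₂ hx₂C
  exact ⟨x₀, x₁, x₂, x₃, hx₀, hx₁F, hx₁C, hx₂F, hx₂C, hx₃⟩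

theorem dvt_corr_chain_three
    {X : Type*} [TopologicalSpace X] [ConnectedSpace X]
    (C : Set X) (hCne : C.Nonempty) (hCproper : C ≠ Set.univ)
    (hC : IsClosed C) (F : X → Set X)
    (hne : ∀ x ∈ C, (F x).Nonempty)
    (hconn : ∀ x ∈ C, IsPreconnected (F x))
    (husc : ∀ U : Set X, IsOpen U → IsOpen {x : C | F (x : X) ⊆ U})
    (hbdr : ∀ x ∈ frontier C, (F x ∩ C).Nonempty) :
    ∃ x₀ x₁ x₂ x₃, x₀ ∈ C ∧ x₁ ∈ F x₀ ∧ x₁ ∈ C ∧ x₂ ∈ F x₁ ∧ x₂ ∈ C ∧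
      x₃ ∈ F x₂ :=
  dvt_corr_chain_three_general C hCne hC F hne hconn husc hbdr
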